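/- Weak normalization at type o^ε: if the empty judgment ⊢ t : o^ε ↪ u is derivable in the step-2 transformation system, then t reduces in the source grammar G to some tree π all of whose leaves are the symbol e (i.e., leaves(π) ∈ e*). -/

import Mathlib

/-- Sorts (simple types): κ ::= o | κ₁ → κ₂. -/
inductive STy where
  | o : STy
  | arr : STy → STy → STy
deriving DecidableEq

/-- ord(o)=0, ord(κ₁→κ₂)=max(ord κ₁ + 1, ord κ₂). -/
def STy.ord : STy → Nat
  | .o => 0
  | .arr a b => max (a.ord + 1) b.ord

/-- The list of argument sorts of a sort. -/
def STy.args : STy → List STy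
  | .o => []
  | .arr a b => a :: b.args

/-- The sort o → ⋯ → o → o with n arguments (sort of an arity-n terminal). -/
def tyOfArity : Nat → STy
  | 0 => .o
  | n + 1 => .arr .o (tyOfArity n)

/-- Applicative terms over non-terminals `N` and terminals `T`,
    with variables named by natural numbers. -/
inductive Tm (N T : Type) where
  | var : Nat → Tm N T
  | nt : N → Tm N T
  | tm : T → Tm N T
  | app : Tm N T → Tm N T → Tm N T
deriving DecidableEq

/-- Simultaneous substitution of the terms `ts` for the variables 0,…,k−1. -/
def substL {N T : Type} (ts : List (Tm N T)) : Tm N T → Tm N T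
  | .var n => ts.getD n (.var n)
  | .nt A => .nt A
  | .tm a => .tm a
  | .app s t => .app (substL ts s) (substL ts t)

/-- Simple typing of applicative terms: terminals of arity k have sort o^k → o. -/
inductive HasTy {N T : Type} (ar : T → Nat) (nty : N → STy) :
    List STy → Tm N T → STy → Prop where
  | var {Γ n κ} : Γ[n]? = some κ → HasTy ar nty Γ (.var n) κ
  | nt {Γ A} : HasTy ar nty Γ (.nt A) (nty A)
  | tm {Γ a} : HasTy ar nty Γ (.tm a) (tyOfArity (ar a))
  | app {Γ s t κ₁ κ₂} : HasTy ar nty Γ s (.arr κ₁ κ₂) → HasTy ar nty Γ t κ₁ →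
      HasTy ar nty Γ (.app s t) κ₂

/-- A higher-order grammar over terminals `T` with arities `ar`: finitely many
    sorted non-terminals, a base-sort start symbol, and for each non-terminal a
    finite set of rule bodies `t` (the rule being A x₁ ⋯ x_k → t), each
    well-typed of base sort under the parameter sorts of A. -/
structure Grammar (T : Type) (ar : T → Nat) where
  N : Type
  nFin : Finite N
  nty : N → STy
  start : N
  startO : nty start = .o
  rules : N → List (Tm N T)
  rulesTy : ∀ A t, t ∈ rules A → HasTy ar nty (nty A).args t .o

/-- Iterated application to a list of arguments. -/
def appList {N T : Type} : Tm N T → List (Tm N T) → Tm N T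
  | s, [] => s
  | s, t :: ts => appList (.app s t) ts

/-- One-step rewriting: a fully applied non-terminal is rewritten by one of its
    rules, and reduction is allowed in the arguments of a terminal. -/
inductive Red {T : Type} {ar : T → Nat} (G : Grammar T ar) :
    Tm G.N T → Tm G.N T → Prop where
  | step {A body ts} : body ∈ G.rules A → ts.length = (G.nty A).args.length →
      Red G (appList (.nt A) ts) (substL ts body)
  | ctx {a t t' ts₁ ts₂} : Red G t t' → ts₁.length + 1 + ts₂.length = ar a →
      Red G (appList (.tm a) (ts₁ ++ t :: ts₂)) (appList (.tm a) (ts₁ ++ t' :: ts₂))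

/-- Many-step reduction. -/
def RedStar {T : Type} {ar : T → Nat} (G : Grammar T ar) :
    Tm G.N T → Tm G.N T → Prop :=
  Relation.ReflTransGen (Red G)

/-- The grammar has order at most n. -/
def Grammar.orderLE {T : Type} {ar : T → Nat} (G : Grammar T ar) (n : Nat) : Prop :=
  ∀ A, (G.nty A).ord ≤ n

/-- Terminal alphabet of word grammars: `some a` has arity 1, `none` is the
    end-of-word symbol e of arity 0. -/
def wordAr {β : Type} : Option β → Nat
  | none => 0
  | some _ => 1

/-- The term a₁(⋯(a_n e)⋯) representing the word a₁⋯a_n. -/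
def wordTm {N β : Type} : List β → Tm N (Option β)
  | [] => .tm none
  | a :: w => .app (.tm (some a)) (wordTm w)

/-- The word language of a word grammar. -/
def WordLang {β : Type} (G : Grammar (Option β) wordAr) : Set (List β) :=
  { w | RedStar G (.nt G.start) (wordTm w) }

/-- Terminal alphabet of tree grammars: a binary `br`, a nullary `e`, and
    nullary letters from β. -/
inductive TSym (β : Type) where
  | br : TSym β
  | e : TSym β
  | ltr : β → TSym β
deriving DecidableEq

def treeAr {β : Type} : TSym β → Nat
  | .br => 2
  | .e => 0
  | .ltr _ => 0

/-- Trees over the alphabet {br, e} ∪ β. -/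
inductive BT (β : Type) where
  | e : BT β
  | ltr : β → BT β
  | br : BT β → BT β → BT β
deriving DecidableEq

/-- A tree as an applicative term. -/
def BT.toTm {N β : Type} : BT β → Tm N (TSym β)
  | .e => .tm .e
  | .ltr a => .tm (.ltr a)
  | .br l r => .app (.app (.tm .br) l.toTm) r.toTm

/-- The frontier word of a tree; `none` stands for the leaf symbol e. -/
def BT.leaves {β : Type} : BT β → List (Option β)
  | .e => [none]
  | .ltr a => [some a]
  | .br l r => l.leaves ++ r.leaves

/-- The frontier language of a tree grammar. -/
def LeafLang {β : Type} (G : Grammar (TSym β) treeAr) : Set (List (Option β)) :=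
  { w | ∃ π : BT β, RedStar G (.nt G.start) π.toTm ∧ π.leaves = w }

/-- The ε-adjusted frontier language: the single-leaf word "e" counts as ε. -/
def LeafLangE {β : Type} (G : Grammar (TSym β) treeAr) : Set (List (Option β)) :=
  { w | w ∈ LeafLang G ∧ w ≠ [none] } ∪ { w | w = [] ∧ [none] ∈ LeafLang G }

/-- Extended terms u ::= x | A | a | u U | λx.u, where an argument
    U = {u₁,…,u_k} (k ≥ 1) is a non-empty set of terms representing
    non-deterministic choice (represented as a list). -/
inductive ETm (V N T : Type) where
  | var : V → ETm V N T
  | nt : N → ETm V N T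
  | tm : T → ETm V N T
  | app : ETm V N T → List (ETm V N T) → ETm V N T
  | lam : V → ETm V N T → ETm V N T

/-- Iterated application of a head to a list of argument sets. -/
def appLE {V N T : Type} : ETm V N T → List (List (ETm V N T)) → ETm V N T
  | u, [] => u
  | u, U :: Us => appLE (.app u U) Us

/-- The set-valued substitution [σ]u of term-sets for variables in an
    extended term. -/
def dsub {V N T : Type} [DecidableEq V]
    (σ : V → Option (List (ETm V N T))) : ETm V N T → List (ETm V N T)
  | .var x => (σ x).getD [.var x]
  | .nt A => [.nt A]
  | .tm a => [.tm a]
  | .app u U =>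
      (dsub σ u).map (fun v => .app v (U.attach.flatMap (fun w => dsub σ w.1)))
  | .lam x u =>
      (dsub (fun y => if y = x then none else σ y) u).map (.lam x)
termination_by u => sizeOf u
decreasing_by
  all_goals simp_wf
  all_goals first
    | omega
    | (have := List.sizeOf_lt_of_mem w.2; omega)

/-- v ∈ [σ]u : v is one of the results of the set-valued substitution. -/
def DSub {V N T : Type} [DecidableEq V]
    (σ : V → Option (List (ETm V N T))) (u v : ETm V N T) : Prop :=
  v ∈ dsub σ u

/-- An extended higher-order grammar: rules A x₁ ⋯ x_k → u. -/
structure EGrammar (V N T : Type) (ar : T → Nat) where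
  start : N
  rules : N → List V → ETm V N T → Prop

/-- The substitution sending the parameters xs to the argument sets Us. -/
def sigmaOf {V N T : Type} [DecidableEq V] (xs : List V)
    (Us : List (List (ETm V N T))) : V → Option (List (ETm V N T)) :=
  fun x => ((xs.zip Us).find? (fun p => p.1 = x)).map Prod.snd

/-- One-step reduction of extended terms: a fully applied non-terminal is
    rewritten (lazily, via the set-valued substitution); under a terminal,
    either a singleton argument is reduced, or a non-singleton argument set is
    collapsed to one of its members. -/
inductive ERed {V N T : Type} [DecidableEq V] {ar : T → Nat}
    (G : EGrammar V N T ar) : ETm V N T → ETm V N T → Prop where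
  | step {A xs body Us u'} : G.rules A xs body → Us.length = xs.length →
      DSub (sigmaOf xs Us) body u' →
      ERed G (appLE (.nt A) Us) u'
  | ctx {a u u' Us₁ Us₂} : ERed G u u' →
      Us₁.length + 1 + Us₂.length = ar a →
      ERed G (appLE (.tm a) (Us₁ ++ [u] :: Us₂))
             (appLE (.tm a) (Us₁ ++ [u'] :: Us₂))
  | collapse {a u U Us₁ Us₂} : u ∈ U → U.length ≠ 1 →
      Us₁.length + 1 + Us₂.length = ar a →
      ERed G (appLE (.tm a) (Us₁ ++ U :: Us₂))
             (appLE (.tm a) (Us₁ ++ [u] :: Us₂))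

/-- Many-step reduction of extended terms. -/
def ERedStar {V N T : Type} [DecidableEq V] {ar : T → Nat}
    (G : EGrammar V N T ar) : ETm V N T → ETm V N T → Prop :=
  Relation.ReflTransGen (ERed G)

/-- Emptiness-tracking intersection types: τ ::= o^ε | o⁺ | τ₁∧⋯∧τ_k → τ. -/
inductive TTy where
  | eps : TTy
  | plus : TTy
  | arr : List TTy → TTy → TTy

noncomputable instance : DecidableEq TTy := Classical.decEq TTy

/-- τ refines the sort κ (both o^ε and o⁺ refine o). -/
inductive RefT : TTy → STy → Prop where
  | eps : RefT .eps .o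
  | plus : RefT .plus .o
  | arr {l τ κ₁ κ₂} : (∀ τ' ∈ l, RefT τ' κ₁) → RefT τ κ₂ →
      RefT (.arr l τ) (.arr κ₁ κ₂)

/-- The sort erasure of an intersection type: both base types go to o,
    τ₁∧⋯∧τ_k → τ goes to ⟨τ₁⟩ → ⋯ → ⟨τ_k⟩ → ⟨τ⟩. -/
def tty2sort : TTy → STy
  | .eps => .o
  | .plus => .o
  | .arr l τ =>
      (l.attach.map (fun w => tty2sort w.1)).foldr STy.arr (tty2sort τ)
termination_by τ => sizeOf τ
decreasing_by
  all_goals simp_wf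
  all_goals first
    | omega
    | (have := List.sizeOf_lt_of_mem w.2; omega)

/-- The return type of an intersection type (after all arrows). -/
def retTy : TTy → TTy
  | .arr _ τ => retTy τ
  | .eps => .eps
  | .plus => .plus

/-- The environment binding the i-th parameter (i = offset, 0-based) to each
    of its conjuncts. -/
noncomputable def paramEnv : TTy → Nat → Finset (Nat × TTy)
  | .arr l τ, i => (l.map (fun τ' => (i, τ'))).toFinset ∪ paramEnv τ (i + 1)
  | _, _ => ∅

/-- The replicated parameter list x'₁,…,x'_ℓ of a transformed rule. -/
def paramList : TTy → Nat → List (Nat × TTy)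
  | .arr l τ, i => l.map (fun τ' => (i, τ')) ++ paramList τ (i + 1)
  | _, _ => []

/-- The step-2 (emptiness-tracking) type-directed transformation
    Γ ⊢ t : τ ↪ u (rules Tr2-*).  Variables and non-terminals are replicated
    per type; subterms of type o^ε under br are eliminated; applications are
    replicated per conjunct; the rule for a non-terminal requires that some
    rule body of it is itself transformable at that type. -/
inductive Tr2 {β : Type} (G : Grammar (TSym β) treeAr) :
    Finset (Nat × TTy) → Tm G.N (TSym β) → TTy →
    ETm (Nat × TTy) (Option (G.N × TTy)) (TSym β) → Prop where
  | var {Δ x τ} : (x, τ) ∈ Δ → Tr2 G Δ (.var x) τ (.var (x, τ))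
  | ce {Δ} : Tr2 G Δ (.tm .e) .eps (.tm .e)
  | ca {Δ a} : Tr2 G Δ (.tm (.ltr a)) .plus (.tm (.ltr a))
  | brPP {Δ t₀ t₁ u₀ u₁} : Tr2 G Δ t₀ .plus u₀ → Tr2 G Δ t₁ .plus u₁ →
      Tr2 G Δ (.app (.app (.tm .br) t₀) t₁) .plus
        (.app (.app (.tm .br) [u₀]) [u₁])
  | brPE {Δ t₀ t₁ u₀ u₁} : Tr2 G Δ t₀ .plus u₀ → Tr2 G Δ t₁ .eps u₁ →
      Tr2 G Δ (.app (.app (.tm .br) t₀) t₁) .plus u₀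
  | brEP {Δ t₀ t₁ u₀ u₁} : Tr2 G Δ t₀ .eps u₀ → Tr2 G Δ t₁ .plus u₁ →
      Tr2 G Δ (.app (.app (.tm .br) t₀) t₁) .plus u₁
  | brEE {Δ t₀ t₁ u₀ u₁} : Tr2 G Δ t₀ .eps u₀ → Tr2 G Δ t₁ .eps u₁ →
      Tr2 G Δ (.app (.app (.tm .br) t₀) t₁) .eps (.tm .e)
  | nt {Δ A τ t u} : RefT τ (G.nty A) → t ∈ G.rules A →
      Tr2 G (paramEnv τ 0) t (retTy τ) u →
      Tr2 G Δ (.nt A) τ (.nt (some (A, τ)))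
  | app {Δ s t l τ v Us} : Tr2 G Δ s (.arr l τ) v →
      Us.length = l.length →
      (∀ i, i < l.length → Us.getD i [] ≠ []) →
      (∀ i, i < l.length → ∀ u ∈ Us.getD i [], Tr2 G Δ t (l.getD i .eps) u) →
      Tr2 G Δ (.app s t) τ (appLE v Us)

/-!
Logical predicates (`LogPred τ` is the paper's `R_τ`). By induction on the transformation, every
transformable term satisfies the predicate of its type under any substitution satisfying its
environment. The rule for a non-terminal `A` supplies a rule body of `A` transformable at `τ`;
rewriting `A` by that rule is the reduction that puts `A` into `LogPred τ`.
-/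

theorem substL_nil {N T : Type} : ∀ t : Tm N T, substL [] t = t
  | .var _ | .nt _ | .tm _ => rfl
  | .app s t => by rw [substL, substL_nil s, substL_nil t]

theorem redStar_appList_tm {T : Type} {ar : T → Nat} {G : Grammar T ar} {a : T}
    {t t' : Tm G.N T} {ts₁ ts₂ : List (Tm G.N T)}
    (h : RedStar G t t') (hlen : ts₁.length + 1 + ts₂.length = ar a) :
    RedStar G (appList (.tm a) (ts₁ ++ t :: ts₂)) (appList (.tm a) (ts₁ ++ t' :: ts₂)) :=
  Relation.ReflTransGen.lift (fun s => appList (.tm a) (ts₁ ++ s :: ts₂))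
    (fun _ _ hr => Red.ctx hr hlen) _ _ h

section LogPred

variable {β : Type} (G : Grammar (TSym β) treeAr)

def ReducesToTree (P : List (Option β) → Prop) (t : Tm G.N (TSym β)) : Prop :=
  ∃ π : BT β, RedStar G t π.toTm ∧ P π.leaves

def LogPred : TTy → Tm G.N (TSym β) → Prop
  | .eps, t => ReducesToTree G (∀ a ∈ ·, a = none) t
  | .plus, t => ReducesToTree G (∃ a ∈ ·, a ≠ none) t
  | .arr l τ, s => ∀ t, (∀ τ' ∈ l, LogPred τ' t) → LogPred τ (.app s t)
termination_by τ => sizeOf τ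
decreasing_by
  all_goals simp_wf
  all_goals first
    | omega
    | (rename_i h; have := List.sizeOf_lt_of_mem h; omega)

inductive LogPredArgs : TTy → List (Tm G.N (TSym β)) → Prop where
  | eps : LogPredArgs .eps []
  | plus : LogPredArgs .plus []
  | arr {l τ t ts} : (∀ τ' ∈ l, LogPred G τ' t) → LogPredArgs τ ts →
      LogPredArgs (.arr l τ) (t :: ts)

def LogPredEnv (Δ : Finset (Nat × TTy)) (ts : List (Tm G.N (TSym β))) : Prop :=
  ∀ x τ, (x, τ) ∈ Δ → ∃ s, ts[x]? = some s ∧ LogPred G τ s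

variable {G}

@[simp]
theorem logPred_eps {t : Tm G.N (TSym β)} :
    LogPred G .eps t ↔ ReducesToTree G (∀ a ∈ ·, a = none) t := by
  rw [LogPred]

@[simp]
theorem logPred_plus {t : Tm G.N (TSym β)} :
    LogPred G .plus t ↔ ReducesToTree G (∃ a ∈ ·, a ≠ none) t := by
  rw [LogPred]

theorem logPred_arr {l : List TTy} {τ : TTy} {s : Tm G.N (TSym β)} :
    LogPred G (.arr l τ) s ↔ ∀ t, (∀ τ' ∈ l, LogPred G τ' t) → LogPred G τ (.app s t) := by
  rw [LogPred]

theorem redStar_br {t₀ t₁ t₀' t₁' : Tm G.N (TSym β)}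
    (h₀ : RedStar G t₀ t₀') (h₁ : RedStar G t₁ t₁') :
    RedStar G (.app (.app (.tm .br) t₀) t₁) (.app (.app (.tm .br) t₀') t₁') :=
  (redStar_appList_tm (ts₁ := []) (ts₂ := [t₁]) h₀ rfl).trans
    (redStar_appList_tm (ts₁ := [t₀']) (ts₂ := []) h₁ rfl)

theorem ReducesToTree.leaf {P : List (Option β) → Prop} (π : BT β) (h : P π.leaves) :
    ReducesToTree G P π.toTm :=
  ⟨π, .refl, h⟩

theorem ReducesToTree.head {P : List (Option β) → Prop} {s s' : Tm G.N (TSym β)}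
    (hr : Red G s s') : ReducesToTree G P s' → ReducesToTree G P s
  | ⟨π, hπ, hP⟩ => ⟨π, .head hr hπ, hP⟩

theorem ReducesToTree.br {P Q R : List (Option β) → Prop} {t₀ t₁ : Tm G.N (TSym β)}
    (h₀ : ReducesToTree G P t₀) (h₁ : ReducesToTree G Q t₁)
    (hPQ : ∀ w₀ w₁, P w₀ → Q w₁ → R (w₀ ++ w₁)) :
    ReducesToTree G R (.app (.app (.tm .br) t₀) t₁) :=
  let ⟨π₀, hπ₀, hP⟩ := h₀
  let ⟨π₁, hπ₁, hQ⟩ := h₁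
  ⟨.br π₀ π₁, redStar_br hπ₀ hπ₁, hPQ _ _ hP hQ⟩

theorem logPred_retTy_of_red {s s' : Tm G.N (TSym β)} (hr : Red G s s') :
    ∀ τ, LogPred G (retTy τ) s' → LogPred G (retTy τ) s
  | .eps => by simpa [retTy] using ReducesToTree.head hr
  | .plus => by simpa [retTy] using ReducesToTree.head hr
  | .arr _ τ => logPred_retTy_of_red hr τ

theorem logPred_of_forall_logPredArgs :
    ∀ (τ : TTy) (s : Tm G.N (TSym β)),
      (∀ ts, LogPredArgs G τ ts → LogPred G (retTy τ) (appList s ts)) → LogPred G τ s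
  | .eps, _, h => h [] .eps
  | .plus, _, h => h [] .plus
  | .arr _ τ, s, h => logPred_arr.2 fun t ht =>
      logPred_of_forall_logPredArgs τ (.app s t) fun ts hts => h (t :: ts) (.arr ht hts)

theorem LogPredArgs.length_eq {τ : TTy} {κ : STy} (href : RefT τ κ) :
    ∀ {ts : List (Tm G.N (TSym β))}, LogPredArgs G τ ts → ts.length = κ.args.length := by
  induction href with
  | eps => rintro _ ⟨⟩; rfl
  | plus => rintro _ ⟨⟩; rfl
  | arr _ _ _ ih => rintro _ (_ | _ | ⟨_, hts⟩); simp [STy.args, ih hts]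

theorem le_of_mem_paramEnv : ∀ {τ : TTy} {i x : Nat} {τ' : TTy}, (x, τ') ∈ paramEnv τ i → i ≤ x
  | .eps, _, _, _ => by simp [paramEnv]
  | .plus, _, _, _ => by simp [paramEnv]
  | .arr l τ, i, x, τ' => by
      simp only [paramEnv, Finset.mem_union, List.mem_toFinset, List.mem_map]
      rintro (⟨_, _, ⟨⟩⟩ | h)
      · exact le_rfl
      · exact (le_of_mem_paramEnv h).trans' (Nat.le_succ i)

theorem LogPredArgs.exists_of_mem_paramEnv {τ : TTy} {ts : List (Tm G.N (TSym β))}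
    (hts : LogPredArgs G τ ts) :
    ∀ {i x τ'}, (x, τ') ∈ paramEnv τ i → ∃ s, ts[x - i]? = some s ∧ LogPred G τ' s := by
  induction hts with
  | eps => simp [paramEnv]
  | plus => simp [paramEnv]
  | @arr l τ t ts ht _ ih =>
    intro i x τ' hx
    simp only [paramEnv, Finset.mem_union, List.mem_toFinset, List.mem_map] at hx
    rcases hx with ⟨τ'', hτ'', ⟨⟩⟩ | hx
    · exact ⟨t, by simp, ht _ hτ''⟩
    · obtain ⟨s, hs, hsτ'⟩ := ih hx
      have : x - i = x - (i + 1) + 1 := by have := le_of_mem_paramEnv hx; omega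
      exact ⟨s, by simpa [this] using hs, hsτ'⟩

theorem LogPredArgs.logPredEnv_paramEnv {τ : TTy} {ts : List (Tm G.N (TSym β))}
    (hts : LogPredArgs G τ ts) : LogPredEnv G (paramEnv τ 0) ts := fun _ _ hx => by
  simpa using hts.exists_of_mem_paramEnv hx

theorem Tr2.logPred_substL {Δ : Finset (Nat × TTy)} {t : Tm G.N (TSym β)} {τ : TTy}
    {u : ETm (Nat × TTy) (Option (G.N × TTy)) (TSym β)} (h : Tr2 G Δ t τ u)
    {ts : List (Tm G.N (TSym β))} (hts : LogPredEnv G Δ ts) : LogPred G τ (substL ts t) := by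
  induction h generalizing ts with
  | var hx =>
    obtain ⟨s, hs, hsτ⟩ := hts _ _ hx
    rwa [substL, List.getD_eq_getElem?_getD, hs, Option.getD_some]
  | ce => exact logPred_eps.2 (ReducesToTree.leaf .e (by simp [BT.leaves]))
  | @ca _ a => exact logPred_plus.2 (ReducesToTree.leaf (.ltr a) (by simp [BT.leaves]))
  | brPP _ _ ih₀ ih₁ =>
    simp only [substL, logPred_plus] at ih₀ ih₁ ⊢
    exact (ih₀ hts).br (ih₁ hts) fun _ _ ⟨a, ha, hne⟩ _ => ⟨a, by simp [ha], hne⟩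
  | brPE _ _ ih₀ ih₁ =>
    simp only [substL, logPred_plus, logPred_eps] at ih₀ ih₁ ⊢
    exact (ih₀ hts).br (ih₁ hts) fun _ _ ⟨a, ha, hne⟩ _ => ⟨a, by simp [ha], hne⟩
  | brEP _ _ ih₀ ih₁ =>
    simp only [substL, logPred_plus, logPred_eps] at ih₀ ih₁ ⊢
    exact (ih₀ hts).br (ih₁ hts) fun _ _ _ ⟨a, ha, hne⟩ => ⟨a, by simp [ha], hne⟩
  | brEE _ _ ih₀ ih₁ =>
    simp only [substL, logPred_eps] at ih₀ ih₁ ⊢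
    exact (ih₀ hts).br (ih₁ hts) fun _ _ h₀ h₁ a ha =>
      (List.mem_append.1 ha).elim (h₀ a) (h₁ a)
  | @nt _ A τ _ _ href hbody _ ih =>
    refine logPred_of_forall_logPredArgs τ (.nt A) fun args hargs => ?_
    exact logPred_retTy_of_red (Red.step hbody (hargs.length_eq href)) τ
      (ih hargs.logPredEnv_paramEnv)
  | @app _ _ _ l _ _ _ _ _ hne _ ihs ihu =>
    refine logPred_arr.1 (ihs hts) _ fun τ' hτ' => ?_
    obtain ⟨i, hi, rfl⟩ := List.mem_iff_getElem.1 hτ'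
    obtain ⟨u', hu'⟩ := List.exists_mem_of_ne_nil _ (hne i hi)
    simpa only [List.getD_eq_getElem l _ hi] using ihu i hi u' hu' hts

end LogPred

/-- Weak normalization at type o^ε: if ⊢ t : o^ε ↪ u is derivable, then t
    reduces in the source grammar G to a tree all of whose leaves are e. -/
theorem stmt13 {β : Type} (G : Grammar (TSym β) treeAr)
    (t : Tm G.N (TSym β))
    (u : ETm (Nat × TTy) (Option (G.N × TTy)) (TSym β))
    (h : Tr2 G ∅ t .eps u) :
    ∃ π : BT β, RedStar G t π.toTm ∧ ∀ a ∈ π.leaves, a = none := by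
  have hR := h.logPred_substL (ts := []) (by simp [LogPredEnv])
  rw [substL_nil, logPred_eps] at hR
  exact hR
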